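/- Locking safety: suppose in round r a value v is locked by some honest validator (i.e., ≥ 2f+1 prevotes for v were received). Then in any later round r' > r, any set of 2f+1 prevotes for a different value v' ≠ v must include at least f+1 validators who prevoted v in round r; if honest validators that locked v never prevote v' ≠ v unless validRound ≥ lockedRound, and no such unlock occurred, fewer than 2f+1 prevotes for v' can come from honest validators plus f Byzantine, so v' cannot gather ≥ 2f+1 prevotes when all 2f+1 prevoters of v in round r were honest and keep their lock. -/
import Mathlib


/-- Locking safety: with n = 3f+1 validators and at most f Byzantine, if ≥ f+1
    honest validators locked v in round r (members of S ∩ Honest) and in a later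
    round r' prevote only v or nil, then any other value v' gathers at most 2f
    prevotes in round r', which is below the quorum 2f+1. -/
theorem stmt_18 {α Val : Type*} [DecidableEq α] [DecidableEq Val]
    (V Honest S : Finset α) (n f : ℕ) (v : Val)
    (prevote' : α → Option Val) -- prevotes in the later round r' (none = nil)
    (hV : V.card = n) (hn : n = 3 * f + 1)
    (hHonest : Honest ⊆ V) (hByz : (V \ Honest).card ≤ f)
    (hS : S ⊆ V) (hScard : S.card ≥ 2 * f + 1)
    (hLocked : (S ∩ Honest).card ≥ f + 1)
    (hKeepLock : ∀ p ∈ S ∩ Honest, prevote' p = some v ∨ prevote' p = none) :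
    ∀ v' : Val, v' ≠ v →
      (V.filter (fun p => prevote' p = some v')).card ≤ 2 * f ∧
        2 * f < 2 * f + 1 := by
  intro v' hv'
  refine ⟨?_, by omega⟩
  have hsub : V.filter (fun p => prevote' p = some v') ⊆ V \ (S ∩ Honest) := by
    intro p hp
    simp only [Finset.mem_filter] at hp
    simp only [Finset.mem_sdiff]
    refine ⟨hp.1, fun hmem => ?_⟩
    rcases hKeepLock p hmem with h | h <;> rw [h] at hp <;> simp at hp
    exact hv' hp.2.symm
  have h1 := Finset.card_le_card hsub
  have h2 : (V \ (S ∩ Honest)).card = V.card - (S ∩ Honest).card :=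
    Finset.card_sdiff_of_subset (by intro p hp; exact hS (Finset.mem_inter.mp hp).1)
  have h3 : (S ∩ Honest).card ≤ V.card := Finset.card_le_card
    (fun p hp => hS (Finset.mem_inter.mp hp).1)
  omega
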